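/- Fix $m \le \binom{n}{2}$ and let $G'$ be a uniformly random $d$-regular graph on $[n]$ (assume one exists). Conditional on $G'$, let $H$ be obtained by keeping a uniformly random subset of $m$ edges of $G'$ (assume $G'$ has at least $m$ edges, i.e., $m \le dn/2$). Let $\bar{H} = K_n - H$, let $\mathbf{t}$ be the vector of degree deficiencies $t_i = d - \deg_H(i)$, and conditional on $H$ let $\bar{H}_{\mathbf{t}}$ be a uniformly random $\mathbf{t}$-factor of $\bar{H}$. Then $H \cup \bar{H}_{\mathbf{t}}$ is a uniformly random $d$-regular graph on $[n]$. -/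

import Mathlib

open MeasureTheory ProbabilityTheory ENNReal

/-- The edge type of the complete graph on `[n]`. -/
abbrev EdgeType (n : ℕ) := {e : Sym2 (Fin n) // ¬ e.IsDiag}

instance (n : ℕ) : MeasurableSpace (Finset (EdgeType n)) := ⊤

/-- The degree of vertex `i` in the graph with edge set `g`. -/
def edeg (n : ℕ) (g : Finset (EdgeType n)) (i : Fin n) : ℕ :=
  (g.filter fun e => i ∈ e.1).card

/-- The set of (edge sets of) `d`-regular graphs on `[n]`. -/
def RegSet (n d : ℕ) : Set (Finset (EdgeType n)) :=
  {g | ∀ i, edeg n g i = d}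

/-!
Every `d`-regular graph has exactly `C(dn/2, m)` sets of `m` edges, so the pair `(G', H)` is
uniform over the pairs with `G'` regular, `H ⊆ G'` and `|H| = m`. Given `H`, `F ↦ H ∪ F` is a
bijection from the `t`-factors of `K_n - H` onto the `d`-regular graphs containing `H`, so the
output `G` is a uniform such graph. Hence `(G, H)` is again uniform over the same pairs, and its
first coordinate `G` is uniform.
-/

theorem sum_ite_mem_eq_ncard_mul {α : Type*} [Fintype α] (s : Set α) [DecidablePred (· ∈ s)]
    (k : ℝ≥0∞) : ∑ a, (if a ∈ s then k else 0) = s.ncard * k := by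
  rw [Finset.sum_ite, Finset.sum_const_zero, add_zero, Finset.sum_const, nsmul_eq_mul,
    Set.ncard_eq_toFinset_card']
  congr 3
  ext; simp

section UniformOn

variable {α β : Type*} [MeasurableSpace α] [MeasurableSpace β]

theorem map_uniformOn_of_injOn {s : Set α} {f : α → β} (hf : Measurable f)
    (hs : MeasurableSet s) (hfs : MeasurableSet (f '' s)) (hinj : Set.InjOn f s) :
    (uniformOn s).map f = uniformOn (f '' s) := by
  ext t ht
  rw [Measure.map_apply hf ht, uniformOn, uniformOn, cond_apply hs, cond_apply hfs,
    Measure.count_apply hs, Measure.count_apply hfs, Measure.count_apply (hs.inter (hf ht)),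
    Measure.count_apply (hfs.inter ht), hinj.encard_image, ← Set.image_inter_preimage,
    (hinj.mono Set.inter_subset_left).encard_image]

variable [MeasurableSingletonClass α]

theorem uniformOn_apply_singleton {s : Set α} (hs : s.Finite) (x : α) [Decidable (x ∈ s)] :
    uniformOn s {x} = if x ∈ s then (s.ncard : ℝ≥0∞)⁻¹ else 0 := by
  rw [uniformOn, cond_apply hs.measurableSet, Measure.count_apply_finite s hs,
    ← Set.ncard_eq_toFinset_card s hs]
  split_ifs with hx
  · rw [Set.inter_singleton_of_mem hx, Measure.count_singleton, mul_one]
  · rw [Set.inter_singleton_eq_empty.2 hx, measure_empty, mul_zero]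

theorem uniformOn_bind_uniformOn_bind_eq [Fintype α] [Fintype β] [MeasurableSingletonClass β]
    (R : Set α) (r : α → β → Prop) {c : ℕ} (hc : c ≠ 0) (hR : ∀ a ∈ R, {b | r a b}.ncard = c)
    (κ : β → Measure α) (hκ : ∀ a ∈ R, ∀ b, r a b → κ b = uniformOn {a' | a' ∈ R ∧ r a' b}) :
    (uniformOn R).bind (fun a => (uniformOn {b | r a b}).bind κ) = uniformOn R := by
  classical
  refine Measure.ext_of_singleton fun x => ?_
  set N : β → Set α := fun b => {a' | a' ∈ R ∧ r a' b}
  set k : ℝ≥0∞ := (c : ℝ≥0∞)⁻¹ * (R.ncard : ℝ≥0∞)⁻¹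
  have hterm : ∀ a b, κ b {x} * uniformOn {b | r a b} {b} * uniformOn R {a} =
      if a ∈ N b then (if x ∈ N b then ((N b).ncard : ℝ≥0∞)⁻¹ else 0) * k else 0 := by
    intro a b
    by_cases hab : a ∈ N b
    · rw [if_pos hab, hκ a hab.1 b hab.2, uniformOn_apply_singleton (Set.toFinite _),
        uniformOn_apply_singleton (Set.toFinite _), uniformOn_apply_singleton (Set.toFinite _),
        if_pos hab.1, if_pos (show b ∈ {b | r a b} from hab.2), hR a hab.1, mul_assoc]
    · rw [if_neg hab, uniformOn_apply_singleton (Set.toFinite _),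
        uniformOn_apply_singleton (Set.toFinite _)]
      by_cases ha : a ∈ R
      · simp [ha, show ¬ r a b from fun h => hab ⟨ha, h⟩]
      · simp [ha]
  have hcollapse : ∀ b, ((N b).ncard : ℝ≥0∞) *
      ((if x ∈ N b then ((N b).ncard : ℝ≥0∞)⁻¹ else 0) * k) = if x ∈ N b then k else 0 := by
    intro b
    split_ifs with hx
    · rw [← mul_assoc, ENNReal.mul_inv_cancel (by simpa using Set.ncard_ne_zero_of_mem hx)
        (natCast_ne_top _), one_mul]
    · rw [zero_mul, mul_zero]
  calc ((uniformOn R).bind fun a => (uniformOn {b | r a b}).bind κ) {x}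
      = ∑ b, ∑ a, if a ∈ N b then (if x ∈ N b then ((N b).ncard : ℝ≥0∞)⁻¹ else 0) * k
          else 0 := by
        simp only [Measure.bind_apply (measurableSet_singleton _)
          (measurable_of_finite _).aemeasurable, lintegral_fintype, Finset.sum_mul, hterm]
        exact Finset.sum_comm
    _ = ∑ b, if b ∈ {b | r x b} then (if x ∈ R then k else 0) else 0 := by
        refine Finset.sum_congr rfl fun b _ => ?_
        rw [sum_ite_mem_eq_ncard_mul, hcollapse]
        by_cases hx : x ∈ R <;> simp [N, hx]
    _ = uniformOn R {x} := by
        rw [sum_ite_mem_eq_ncard_mul, uniformOn_apply_singleton (Set.toFinite _)]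
        split_ifs with hx
        · rw [hR x hx, ← mul_assoc, ENNReal.mul_inv_cancel (by exact_mod_cast hc)
            (natCast_ne_top _), one_mul]
        · rw [mul_zero]

end UniformOn

section Graphs

variable {n : ℕ}

theorem card_filter_mem_edge (e : EdgeType n) : (Finset.univ.filter (· ∈ e.1)).card = 2 := by
  rw [← Sym2.card_toFinset_of_not_isDiag e.1 e.2]
  congr 1
  ext; simp

theorem sum_edeg (g : Finset (EdgeType n)) : ∑ i, edeg n g i = 2 * g.card := by
  simp only [edeg, Finset.card_filter]
  rw [Finset.sum_comm]
  simp only [← Finset.card_filter, card_filter_mem_edge, Finset.sum_const, smul_eq_mul, mul_comm]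

theorem two_mul_card_of_mem_regSet {d : ℕ} {g : Finset (EdgeType n)} (hg : g ∈ RegSet n d) :
    2 * g.card = d * n := by
  rw [← sum_edeg, Finset.sum_congr rfl fun i _ => hg i]
  simp [mul_comm]

theorem edeg_union_of_disjoint {H F : Finset (EdgeType n)} (h : Disjoint H F) (i : Fin n) :
    edeg n (H ∪ F) i = edeg n H i + edeg n F i := by
  rw [edeg, Finset.filter_union, Finset.card_union_of_disjoint (Finset.disjoint_filter_filter h)]
  rfl

theorem edeg_mono {H G : Finset (EdgeType n)} (h : H ⊆ G) (i : Fin n) :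
    edeg n H i ≤ edeg n G i :=
  Finset.card_le_card (Finset.filter_subset_filter _ h)

/-- The $\mathbf t$-factors of $K_n - H$ for $t_i = d - \deg_H(i)$. -/
def deficiencyFactors (n d : ℕ) (H : Finset (EdgeType n)) : Set (Finset (EdgeType n)) :=
  {F | F ⊆ Finset.univ \ H ∧ ∀ i, edeg n F i = d - edeg n H i}

theorem disjoint_of_mem_deficiencyFactors {d : ℕ} {H F : Finset (EdgeType n)}
    (hF : F ∈ deficiencyFactors n d H) : Disjoint H F :=
  (Finset.subset_sdiff.1 hF.1).2.symm

theorem mem_deficiencyFactors_iff {d : ℕ} {H F : Finset (EdgeType n)}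
    (hH : ∀ i, edeg n H i ≤ d) :
    F ∈ deficiencyFactors n d H ↔ Disjoint H F ∧ H ∪ F ∈ RegSet n d := by
  have hdisj : F ⊆ Finset.univ \ H ↔ Disjoint H F := by
    simp [Finset.subset_sdiff, disjoint_comm]
  simp only [deficiencyFactors, RegSet, Set.mem_ofPred_eq, hdisj]
  refine and_congr_right fun hd => forall_congr' fun i => ?_
  rw [edeg_union_of_disjoint hd]
  have := hH i
  omega

theorem injOn_union_deficiencyFactors (d : ℕ) (H : Finset (EdgeType n)) :
    Set.InjOn (H ∪ ·) (deficiencyFactors n d H) := by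
  intro F₁ h₁ F₂ h₂ h
  rw [← Finset.union_sdiff_cancel_left (disjoint_of_mem_deficiencyFactors h₁),
    ← Finset.union_sdiff_cancel_left (disjoint_of_mem_deficiencyFactors h₂)]
  exact congrArg (· \ H) h

theorem image_union_deficiencyFactors {d : ℕ} {H : Finset (EdgeType n)}
    (hH : ∀ i, edeg n H i ≤ d) :
    (H ∪ ·) '' deficiencyFactors n d H = {G | G ∈ RegSet n d ∧ H ⊆ G} := by
  ext G
  simp only [Set.mem_image, mem_deficiencyFactors_iff hH]
  constructor
  · rintro ⟨F, ⟨-, hreg⟩, rfl⟩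
    exact ⟨hreg, Finset.subset_union_left⟩
  · rintro ⟨hreg, hHG⟩
    refine ⟨G \ H, ⟨Finset.disjoint_sdiff, ?_⟩, Finset.union_sdiff_of_subset hHG⟩
    rwa [Finset.union_sdiff_of_subset hHG]

theorem ncard_subsets_card_eq (G : Finset (EdgeType n)) (m : ℕ) :
    {H : Finset (EdgeType n) | H ⊆ G ∧ H.card = m}.ncard = G.card.choose m := by
  rw [← Finset.card_powersetCard, ← Set.ncard_coe_finset]
  congr 1
  ext; simp [Finset.mem_powersetCard]

end Graphs

theorem completion_uniform_general (n d m : ℕ) (hm : m ≤ d * n / 2) :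
    ((uniformOn (RegSet n d)).bind fun G' =>
      (uniformOn {H : Finset (EdgeType n) | H ⊆ G' ∧ H.card = m}).bind fun H =>
        (uniformOn {F : Finset (EdgeType n) |
            F ⊆ Finset.univ \ H ∧ ∀ i, edeg n F i = d - edeg n H i}).map
          fun F => H ∪ F)
      = uniformOn (RegSet n d) := by
  refine uniformOn_bind_uniformOn_bind_eq (RegSet n d) (fun G' H => H ⊆ G' ∧ H.card = m)
    (Nat.choose_pos hm).ne' (fun G' hG' => ?_) _ (fun G' hG' H hH => ?_)
  · have := two_mul_card_of_mem_regSet hG'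
    rw [ncard_subsets_card_eq, show G'.card = d * n / 2 by omega]
  · have hdeg : ∀ i, edeg n H i ≤ d := fun i => (edeg_mono hH.1 i).trans_eq (hG' i)
    change (uniformOn (deficiencyFactors n d H)).map (H ∪ ·) = _
    rw [map_uniformOn_of_injOn .of_discrete .of_discrete .of_discrete
      (injOn_union_deficiencyFactors d H), image_union_deficiencyFactors hdeg]
    simp [hH.2]

/-- Sample a uniformly random `d`-regular graph `G'`, keep a uniformly random set `H` of `m` of
its edges, and then take a uniformly random `t`-factor of `K_n - H` where `t i = d - deg_H(i)`;
the union of `H` with this factor is a uniformly random `d`-regular graph. -/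
theorem completion_uniform (n d m : ℕ) (hm : m ≤ d * n / 2) (hne : (RegSet n d).Nonempty) :
    ((uniformOn (RegSet n d)).bind fun G' =>
      (uniformOn {H : Finset (EdgeType n) | H ⊆ G' ∧ H.card = m}).bind fun H =>
        (uniformOn {F : Finset (EdgeType n) |
            F ⊆ Finset.univ \ H ∧ ∀ i, edeg n F i = d - edeg n H i}).map
          fun F => H ∪ F)
      = uniformOn (RegSet n d) :=
  completion_uniform_general n d m hm
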